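/- arXiv:2404.03272 — 4 statements merged into one kernel-verified Lean document; each statement's English description precedes it below -/
import Mathlib

section
/- For any γ > 0, the second moment of the discrete Gaussian A_γ on the lattice (1/γ)ℤ with width 1 is strictly less than 1/(2π). Here A_γ assigns to each point x ∈ (1/γ)ℤ probability ρ(x)/ρ((1/γ)ℤ), where ρ(x) = exp(-π x²). -/
/-!
By Poisson summation, `∑_{x ∈ (1/γ)ℤ} (1/(2π) - x²) ρ(x) = γ ∑_{y ∈ γℤ} y² ρ(y)`, since the
Fourier transform of `(1/(2π) - x²) ρ(x)` is `y² ρ(y)`: for `g(x) = exp(-A x²)` one has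
`(1/(2A) - x²) g = -g''/(4A²)`, and `𝓕(u') = 2πit 𝓕u`. The right-hand side is positive, and
multiplied out the left-hand side is `ρ((1/γ)ℤ)/(2π) - ∑_{x ∈ (1/γ)ℤ} x² ρ(x)`.
-/

open Real

/-- Gaussian mass of the lattice `(1/γ)ℤ`. -/
noncomputable def latticeMass (γ : ℝ) : ℝ :=
  ∑' k : ℤ, Real.exp (-Real.pi * ((k : ℝ) / γ) ^ 2)

open Complex Filter Asymptotics MeasureTheory FourierTransform

lemma isLittleO_pow_mul_cexp_neg_mul_sq_cocompact {A : ℂ} (hA : 0 < A.re) (k : ℕ) (s : ℝ) :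
    (fun x : ℝ => (x : ℂ) ^ k * cexp (-A * x ^ 2)) =o[cocompact ℝ] (|·| ^ s) := by
  have hpow : (fun x : ℝ => (x : ℂ) ^ k) =O[cocompact ℝ] (|·| ^ (k : ℝ)) :=
    IsBigO.of_bound 1 (Eventually.of_forall fun x => by simp [Real.rpow_natCast])
  refine (hpow.mul_isLittleO (isLittleO_exp_neg_mul_sq_cocompact hA (s - k))).congr' .rfl ?_
  filter_upwards [(isCompact_singleton (x := (0 : ℝ))).compl_mem_cocompact] with x hx
  rw [← Real.rpow_add (abs_pos.2 hx), add_sub_cancel]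

lemma integrable_pow_mul_cexp_neg_mul_sq {A : ℂ} (hA : 0 < A.re) (k : ℕ) :
    Integrable fun x : ℝ => (x : ℂ) ^ k * cexp (-A * x ^ 2) := by
  refine ⟨by fun_prop, ?_⟩
  have := (integrable_rpow_mul_exp_neg_mul_sq hA
    (neg_one_lt_zero.trans_le (Nat.cast_nonneg k))).hasFiniteIntegral
  rw [← hasFiniteIntegral_norm_iff] at this ⊢
  convert this using 2 with x
  rw [norm_mul, norm_mul, norm_cexp_neg_mul_sq, Real.rpow_natCast, norm_pow, norm_pow, norm_real,
    Real.norm_of_nonneg (exp_pos _).le]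

lemma hasDerivAt_cexp_neg_mul_sq (A : ℂ) (x : ℝ) :
    HasDerivAt (fun x : ℝ => cexp (-A * x ^ 2)) (-2 * A * x * cexp (-A * x ^ 2)) x := by
  convert ((hasDerivAt_pow 2 x).ofReal_comp.const_mul (-A)).cexp using 1
  · simp
  · push_cast
    ring

lemma hasDerivAt_mul_cexp_neg_mul_sq (A : ℂ) (x : ℝ) :
    HasDerivAt (fun x : ℝ => x * cexp (-A * x ^ 2))
      ((1 - 2 * A * x ^ 2) * cexp (-A * x ^ 2)) x := by
  have hx : HasDerivAt (fun y : ℝ => (y : ℂ)) 1 x := by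
    simpa using (hasDerivAt_id x).ofReal_comp
  exact (hx.mul (hasDerivAt_cexp_neg_mul_sq A x)).congr_deriv (by ring)

lemma fourier_const_mul (c : ℂ) (f : ℝ → ℂ) :
    𝓕 (fun x => c * f x) = fun t => c * 𝓕 f t :=
  VectorFourier.fourierIntegral_const_smul _ _ _ _ _

theorem fourier_sub_sq_mul_cexp_neg_mul_sq {A : ℂ} (hA : 0 < A.re) (t : ℝ) :
    𝓕 (fun x : ℝ => ((1 / (2 * A) - x ^ 2) * cexp (-A * x ^ 2) : ℂ)) t
      = π ^ 2 * t ^ 2 / A ^ 2 * 𝓕 (fun x : ℝ => cexp (-A * x ^ 2)) t := by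
  have hA0 : A ≠ 0 := fun h => by simp [h] at hA
  set g := fun x : ℝ => cexp (-A * x ^ 2)
  set h := fun x : ℝ => x * g x
  set f := fun x : ℝ => (1 / (2 * A) - x ^ 2) * g x
  have hg' : deriv g = fun x => -2 * A * h x :=
    funext fun x => (hasDerivAt_cexp_neg_mul_sq A x).deriv.trans (by ring)
  have hh' : deriv h = fun x => 2 * A * f x :=
    funext fun x => (hasDerivAt_mul_cexp_neg_mul_sq A x).deriv.trans <| by
      simp only [f, g]
      field_simp
  have hg_int : Integrable g := by simpa [g] using integrable_pow_mul_cexp_neg_mul_sq hA 0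
  have hh_int : Integrable h := by simpa [h, g] using integrable_pow_mul_cexp_neg_mul_sq hA 1
  have hf_int : Integrable f :=
    (((integrable_pow_mul_cexp_neg_mul_sq hA 0).const_mul (1 / (2 * A))).sub
      (integrable_pow_mul_cexp_neg_mul_sq hA 2)).congr
      (.of_forall fun x => by simp only [f, g, Pi.sub_apply]; ring)
  have Fg := congrFun (Real.fourier_deriv hg_int
    (fun x => (hasDerivAt_cexp_neg_mul_sq A x).differentiableAt) (hg' ▸ hh_int.const_mul _)) t
  have Fh := congrFun (Real.fourier_deriv hh_int
    (fun x => (hasDerivAt_mul_cexp_neg_mul_sq A x).differentiableAt) (hh' ▸ hf_int.const_mul _)) t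
  rw [hg', fourier_const_mul] at Fg
  rw [hh', fourier_const_mul] at Fh
  simp only [smul_eq_mul] at Fg Fh
  field_simp
  linear_combination A / 2 * Fh - π * I * t / 2 * Fg - π ^ 2 * t ^ 2 * 𝓕 g t * I_sq

theorem tsum_sub_sq_mul_cexp_neg_pi_mul_int_sq {b : ℂ} (hb : 0 < b.re) :
    ∑' n : ℤ, (1 / (2 * π * b) - (n : ℂ) ^ 2) * cexp (-π * b * n ^ 2)
      = ∑' n : ℤ, (n : ℂ) ^ 2 / b ^ 2 * (1 / b ^ (1 / 2 : ℂ) * cexp (-π / b * n ^ 2)) := by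
  have hA : 0 < (π * b).re := by rw [re_ofReal_mul]; positivity
  have hA' : 0 < (π / b).re := by
    rw [div_eq_mul_inv, re_ofReal_mul, inv_re]
    exact mul_pos pi_pos (div_pos hb (normSq_pos.mpr fun h => by simp [h] at hb))
  set f : ℝ → ℂ := fun x => (1 / (2 * (π * b)) - x ^ 2) * cexp (-(π * b) * x ^ 2)
  have hFf : 𝓕 f
      = fun t : ℝ => (t : ℂ) ^ 2 / b ^ 2 * (1 / b ^ (1 / 2 : ℂ) * cexp (-π / b * t ^ 2)) := by
    have hb0 : b ≠ 0 := fun h => by simp [h] at hb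
    ext t
    have hg : 𝓕 (fun x : ℝ => cexp (-(π * b) * x ^ 2)) t
        = 1 / b ^ (1 / 2 : ℂ) * cexp (-π / b * t ^ 2) := by
      rw [← congrFun (fourier_gaussian_pi hb) t]
      simp only [neg_mul]
    rw [fourier_sub_sq_mul_cexp_neg_mul_sq hA, hg]
    field_simp
  have f_bd : f =O[cocompact ℝ] (|·| ^ (-2 : ℝ)) :=
    (((isLittleO_pow_mul_cexp_neg_mul_sq_cocompact hA 0 _).const_mul_left (1 / (2 * (π * b)))).sub
      (isLittleO_pow_mul_cexp_neg_mul_sq_cocompact hA 2 _)).isBigO.congr_left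
      fun x => by simp only [f]; ring
  have Ff_bd : 𝓕 f =O[cocompact ℝ] (|·| ^ (-2 : ℝ)) := by
    rw [hFf]
    exact ((isLittleO_pow_mul_cexp_neg_mul_sq_cocompact hA' 2 _).const_mul_left
      (1 / b ^ 2 * (1 / b ^ (1 / 2 : ℂ)))).isBigO.congr_left fun x => by ring_nf
  convert Real.tsum_eq_tsum_fourier_of_rpow_decay (by fun_prop) one_lt_two f_bd Ff_bd 0 using 1
  · simp [f, mul_assoc]
  · simp only [hFf, QuotientAddGroup.mk_zero, fourier_eval_zero, mul_one, ofReal_intCast]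

theorem tsum_sub_sq_mul_gaussian_div_eq {γ : ℝ} (hγ : 0 < γ) :
    ∑' k : ℤ, (1 / (2 * π) - (k / γ) ^ 2) * rexp (-π * (k / γ) ^ 2)
      = γ * ∑' k : ℤ, (k * γ) ^ 2 * rexp (-π * (k * γ) ^ 2) := by
  have h := tsum_sub_sq_mul_cexp_neg_pi_mul_int_sq (b := ((γ ^ 2)⁻¹ : ℝ))
    (by rw [ofReal_re]; positivity)
  have hγ0 : (γ : ℂ) ≠ 0 := ofReal_ne_zero.2 hγ.ne'
  have hsqrt : ((((γ ^ 2)⁻¹ : ℝ) : ℂ) ^ (1 / 2 : ℂ)) = ((γ⁻¹ : ℝ) : ℂ) := by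
    rw [show (1 / 2 : ℂ) = ((1 / 2 : ℝ) : ℂ) by push_cast; rfl, ← ofReal_cpow (by positivity),
      Real.inv_rpow (by positivity), ← Real.sqrt_eq_rpow, Real.sqrt_sq hγ.le]
  have hL (n : ℤ) : (1 / (2 * π * ((γ ^ 2)⁻¹ : ℝ)) - (n : ℂ) ^ 2)
      * cexp (-π * ((γ ^ 2)⁻¹ : ℝ) * n ^ 2)
      = ((γ ^ 2 * ((1 / (2 * π) - (n / γ) ^ 2) * rexp (-π * (n / γ) ^ 2)) : ℝ) : ℂ) := by
    push_cast
    field_simp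
  have hR (n : ℤ) : (n : ℂ) ^ 2 / ((γ ^ 2)⁻¹ : ℝ) ^ 2
      * (1 / (((γ ^ 2)⁻¹ : ℝ) : ℂ) ^ (1 / 2 : ℂ) * cexp (-π / ((γ ^ 2)⁻¹ : ℝ) * n ^ 2))
      = ((γ ^ 3 * ((n * γ) ^ 2 * rexp (-π * (n * γ) ^ 2)) : ℝ) : ℂ) := by
    rw [hsqrt]
    push_cast
    field_simp
  rw [tsum_congr hL, tsum_congr hR, ← ofReal_tsum, ← ofReal_tsum, ofReal_inj, tsum_mul_left,
    tsum_mul_left] at h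
  refine mul_left_cancel₀ (pow_ne_zero 2 hγ.ne') ?_
  rw [h]
  ring

lemma summable_pow_mul_exp_neg_mul_int_sq (m : ℕ) {a : ℝ} (ha : 0 < a) :
    Summable fun n : ℤ => (n : ℝ) ^ m * rexp (-a * n ^ 2) := by
  have h := summable_of_isBigO (Real.summable_abs_int_rpow one_lt_two)
    ((isLittleO_pow_mul_cexp_neg_mul_sq_cocompact (A := a) (by rwa [ofReal_re]) m (-2)).isBigO
      |>.comp_tendsto Int.tendsto_coe_cofinite)
  exact summable_ofReal.mp (h.congr fun n => by simp)

lemma summable_mul_pow_mul_exp_neg_pi_mul_sq (m : ℕ) {c : ℝ} (hc : c ≠ 0) :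
    Summable fun k : ℤ => (k * c) ^ m * rexp (-π * (k * c) ^ 2) :=
  ((summable_pow_mul_exp_neg_mul_int_sq m (a := π * c ^ 2) (by positivity)).mul_left (c ^ m)).congr
    fun k => by ring_nf

theorem tsum_sub_sq_mul_gaussian_div_pos {γ : ℝ} (hγ : 0 < γ) :
    0 < ∑' k : ℤ, (1 / (2 * π) - (k / γ) ^ 2) * rexp (-π * (k / γ) ^ 2) := by
  rw [tsum_sub_sq_mul_gaussian_div_eq hγ]
  exact mul_pos hγ ((summable_mul_pow_mul_exp_neg_pi_mul_sq 2 hγ.ne').tsum_pos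
    (fun k => by positivity) 1 (by positivity))

/-- The second moment of the discrete Gaussian `A_γ` on `(1/γ)ℤ` (mass at `k/γ`
proportional to `exp (-π (k/γ)²)`) is strictly less than `1/(2π)`. -/
theorem discreteGaussian_secondMoment_lt (γ : ℝ) (hγ : 0 < γ) :
    (1 / latticeMass γ) *
      ∑' k : ℤ, ((k : ℝ) / γ) ^ 2 * Real.exp (-Real.pi * ((k : ℝ) / γ) ^ 2)
    < 1 / (2 * Real.pi) := by
  have hsum (m : ℕ) : Summable fun k : ℤ => ((k : ℝ) / γ) ^ m * rexp (-π * (k / γ) ^ 2) := by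
    simpa only [div_eq_mul_inv] using
      summable_mul_pow_mul_exp_neg_pi_mul_sq m (inv_ne_zero hγ.ne')
  have hsum_mass : Summable fun k : ℤ => rexp (-π * ((k : ℝ) / γ) ^ 2) := by
    simpa using hsum 0
  have hmass : 0 < latticeMass γ :=
    hsum_mass.tsum_pos (fun _ => (exp_pos _).le) 0 (exp_pos _)
  have hsplit : ∑' k : ℤ, (1 / (2 * π) - (k / γ) ^ 2) * rexp (-π * (k / γ) ^ 2)
      = latticeMass γ / (2 * π) - ∑' k : ℤ, ((k : ℝ) / γ) ^ 2 * rexp (-π * (k / γ) ^ 2) := by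
    rw [latticeMass, ← tsum_div_const, ← (hsum_mass.div_const _).tsum_sub (hsum 2)]
    exact tsum_congr fun k => by ring
  rw [one_div, inv_mul_lt_iff₀ hmass, mul_one_div]
  linarith [tsum_sub_sq_mul_gaussian_div_pos hγ]
end

section
/- For any γ > 0 and σ > 0, the KL divergence between the σ-smoothed discrete Gaussian A_γ^σ and Q = N(0, 1/(2π)) satisfies KL(A_γ^σ ‖ Q) ≤ log(√(1+σ²)/σ) ≤ 1/(2σ²). -/
/-!
Multiplying `exp(-πz²)` into each term of `T_γ^σ` and completing the square shows that
`exp(-πz²) T_γ^σ(z)` is a probability density. For the pointwise bound, write the sum in `T_γ^σ(z)`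
as `∑ₖ exp(-πc(x - k)²)` with `c = (1+σ²)/(γσ)²`: Poisson summation shows that this theta sum is
largest at `x = 0`, and `∑ₖ exp(-πck²) ≤ ∑ₖ exp(-πk²/γ²) = ρ((1/γ)ℤ)` because `c ≥ 1/γ²`. Hence
`T_γ^σ ≤ √(1+σ²)/σ`, so `KL = ∫ exp(-πz²) T log T ≤ log(√(1+σ²)/σ) = ½ log(1 + 1/σ²) ≤ 1/(2σ²)`.
-/

open Real

/-- Likelihood ratio `T_γ^σ` of the σ-smoothed discrete Gaussian on `(1/γ)ℤ`
with respect to `Q = N(0, 1/(2π))` (whose density is `exp(-πx²)`). -/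
noncomputable def pancakeLR (γ σ z : ℝ) : ℝ :=
  (Real.sqrt (1 + σ ^ 2) / (σ * latticeMass γ)) *
    ∑' k : ℤ, Real.exp (-Real.pi * (z - Real.sqrt (1 + σ ^ 2) * (k : ℝ) / γ) ^ 2 / σ ^ 2)

open MeasureTheory

lemma summable_exp_neg_mul_sub_int_sq {c : ℝ} (hc : 0 < c) (x : ℝ) :
    Summable fun n : ℤ => exp (-π * c * (x - n) ^ 2) := by
  refine (summable_pow_mul_jacobiTheta₂_term_bound (c * |x|) hc 0).of_nonneg_of_le
    (fun n => (exp_pos _).le) fun n => ?_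
  rw [pow_zero, one_mul, exp_le_exp, Int.cast_abs]
  have hxn : x * n ≤ |x| * |(n : ℝ)| := (le_abs_self _).trans (abs_mul x n).le
  nlinarith [mul_pos pi_pos hc, sq_nonneg x, sq_abs (n : ℝ)]

lemma summable_exp_neg_mul_int_sq {c : ℝ} (hc : 0 < c) :
    Summable fun n : ℤ => exp (-π * c * (n : ℝ) ^ 2) := by
  simpa only [zero_sub, neg_sq] using summable_exp_neg_mul_sub_int_sq hc 0

lemma tsum_exp_neg_mul_int_sq_le_of_le {c c' : ℝ} (hc : 0 < c) (hcc' : c ≤ c') :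
    ∑' n : ℤ, exp (-π * c' * (n : ℝ) ^ 2) ≤ ∑' n : ℤ, exp (-π * c * (n : ℝ) ^ 2) := by
  refine Summable.tsum_le_tsum (fun n => exp_le_exp.2 ?_)
    (summable_exp_neg_mul_int_sq (hc.trans_le hcc')) (summable_exp_neg_mul_int_sq hc)
  have := mul_le_mul_of_nonneg_right hcc' (sq_nonneg (n : ℝ))
  nlinarith [pi_pos]

/-- By Poisson summation the left side is `c^{-1/2} ∑ₙ exp(-πn²/c) e^{2πinx}`, and dropping the
phases `e^{2πinx}` gives the same formula at `x = 0`. -/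
lemma tsum_exp_neg_mul_sub_int_sq_le {c : ℝ} (hc : 0 < c) (x : ℝ) :
    ∑' n : ℤ, exp (-π * c * (x - n) ^ 2) ≤ ∑' n : ℤ, exp (-π * c * (n : ℝ) ^ 2) := by
  set r : ℝ := c⁻¹ ^ (1 / 2 : ℝ)
  have hr : 0 < r := by positivity
  have hpoisson := Complex.tsum_exp_neg_quadratic (a := ((c⁻¹ : ℝ) : ℂ)) (by simpa using hc)
    (Complex.I * x)
  have hpow : ((c⁻¹ : ℝ) : ℂ) ^ (1 / 2 : ℂ) = r := by
    rw [Complex.ofReal_cpow (by positivity)]; push_cast; rfl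
  have hshift : ∀ n : ℤ,
      Complex.exp (-π / ((c⁻¹ : ℝ) : ℂ) * (n + Complex.I * (Complex.I * x)) ^ 2)
        = (exp (-π * c * (x - n) ^ 2) : ℝ) := by
    intro n
    rw [Complex.ofReal_exp]
    congr 1
    push_cast
    ring_nf
    simp [Complex.I_sq]
  have hnorm : ∀ n : ℤ,
      ‖Complex.exp (-π * ((c⁻¹ : ℝ) : ℂ) * n ^ 2 + 2 * π * (Complex.I * x) * n)‖
        = exp (-π * c⁻¹ * (n : ℝ) ^ 2) := by
    intro n
    rw [Complex.norm_exp]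
    congr 1
    simp [← Complex.ofReal_intCast, ← Complex.ofReal_pow]
  rw [hpow, tsum_congr hshift, ← Complex.ofReal_tsum] at hpoisson
  have hdual := Real.tsum_exp_neg_mul_int_sq (inv_pos.2 hc)
  simp only [div_inv_eq_mul] at hdual
  calc ∑' n : ℤ, exp (-π * c * (x - n) ^ 2)
      = r * ‖∑' n : ℤ,
          Complex.exp (-π * ((c⁻¹ : ℝ) : ℂ) * n ^ 2 + 2 * π * (Complex.I * x) * n)‖ := by
        rw [hpoisson, norm_mul, norm_div, norm_one, Complex.norm_real, Complex.norm_real,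
          Real.norm_of_nonneg hr.le, Real.norm_of_nonneg (tsum_nonneg fun n => (exp_pos _).le)]
        field_simp
    _ ≤ r * ∑' n : ℤ, exp (-π * c⁻¹ * (n : ℝ) ^ 2) := by
        gcongr
        refine (norm_tsum_le_tsum_norm ?_).trans_eq (tsum_congr hnorm)
        simpa only [hnorm] using summable_exp_neg_mul_int_sq (inv_pos.2 hc)
    _ = ∑' n : ℤ, exp (-π * c * (n : ℝ) ^ 2) := by
        rw [hdual, ← mul_assoc, mul_one_div_cancel hr.ne', one_mul]

lemma exp_neg_pi_sq_mul_exp_neg_pi_sub_sq_div {σ : ℝ} (hσ : σ ≠ 0) (t z : ℝ) :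
    exp (-π * z ^ 2) * exp (-π * (z - t) ^ 2 / σ ^ 2)
      = exp (-π * t ^ 2 / (1 + σ ^ 2)) *
        exp (-(π * ((1 + σ ^ 2) / σ ^ 2)) * (z - t / (1 + σ ^ 2)) ^ 2) := by
  rw [← exp_add, ← exp_add]
  congr 1
  field_simp
  ring

lemma integral_exp_neg_pi_sq_mul_exp_neg_pi_sub_sq_div {σ : ℝ} (hσ : 0 < σ) (t : ℝ) :
    ∫ z, exp (-π * z ^ 2) * exp (-π * (z - t) ^ 2 / σ ^ 2)
      = σ / √(1 + σ ^ 2) * exp (-π * t ^ 2 / (1 + σ ^ 2)) := by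
  simp_rw [exp_neg_pi_sq_mul_exp_neg_pi_sub_sq_div hσ.ne' t]
  rw [integral_const_mul,
    integral_sub_right_eq_self (fun z => exp (-(π * ((1 + σ ^ 2) / σ ^ 2)) * z ^ 2)),
    integral_gaussian, mul_comm]
  congr 1
  rw [show π / (π * ((1 + σ ^ 2) / σ ^ 2)) = σ ^ 2 / (1 + σ ^ 2) by field_simp,
    sqrt_div' _ (by positivity), sqrt_sq hσ.le]

section

variable {γ σ : ℝ}

lemma latticeMass_eq_tsum (γ : ℝ) :
    latticeMass γ = ∑' n : ℤ, exp (-π * (γ ^ 2)⁻¹ * (n : ℝ) ^ 2) := by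
  unfold latticeMass
  congr! 3
  ring

lemma one_le_latticeMass (hγ : 0 < γ) : 1 ≤ latticeMass γ := by
  rw [latticeMass_eq_tsum]
  simpa using (summable_exp_neg_mul_int_sq (by positivity : 0 < (γ ^ 2)⁻¹)).le_tsum 0
    fun n _ => (exp_pos _).le

lemma latticeMass_pos (hγ : 0 < γ) : 0 < latticeMass γ :=
  zero_lt_one.trans_le (one_le_latticeMass hγ)

lemma pancakeLR_term_eq (hγ : 0 < γ) (hσ : 0 < σ) (z : ℝ) (k : ℤ) :
    exp (-π * (z - √(1 + σ ^ 2) * k / γ) ^ 2 / σ ^ 2)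
      = exp (-π * ((1 + σ ^ 2) / (γ * σ) ^ 2) * (z * γ / √(1 + σ ^ 2) - k) ^ 2) := by
  have hs : √(1 + σ ^ 2) ^ 2 = 1 + σ ^ 2 := sq_sqrt (by positivity)
  have hs0 : √(1 + σ ^ 2) ≠ 0 := by positivity
  congr 1
  field_simp
  rw [hs]

lemma summable_pancakeLR_terms (hγ : 0 < γ) (hσ : 0 < σ) (z : ℝ) :
    Summable fun k : ℤ => exp (-π * (z - √(1 + σ ^ 2) * k / γ) ^ 2 / σ ^ 2) := by
  simp_rw [pancakeLR_term_eq hγ hσ]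
  exact summable_exp_neg_mul_sub_int_sq (by positivity) _

lemma tsum_pancakeLR_terms_le (hγ : 0 < γ) (hσ : 0 < σ) (z : ℝ) :
    ∑' k : ℤ, exp (-π * (z - √(1 + σ ^ 2) * k / γ) ^ 2 / σ ^ 2) ≤ latticeMass γ := by
  simp_rw [pancakeLR_term_eq hγ hσ]
  refine (tsum_exp_neg_mul_sub_int_sq_le (by positivity) _).trans ?_
  rw [latticeMass_eq_tsum]
  refine tsum_exp_neg_mul_int_sq_le_of_le (by positivity) ?_
  rw [le_div_iff₀ (by positivity), mul_pow, ← mul_assoc, inv_mul_cancel₀ (by positivity), one_mul]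
  linarith

lemma pancakeLR_pos (hγ : 0 < γ) (hσ : 0 < σ) (z : ℝ) : 0 < pancakeLR γ σ z := by
  have hM := latticeMass_pos hγ
  exact mul_pos (by positivity)
    ((summable_pancakeLR_terms hγ hσ z).tsum_pos (fun k => (exp_pos _).le) 0 (exp_pos _))

lemma pancakeLR_le (hγ : 0 < γ) (hσ : 0 < σ) (z : ℝ) :
    pancakeLR γ σ z ≤ √(1 + σ ^ 2) / σ := by
  have hM := latticeMass_pos hγ
  calc pancakeLR γ σ z ≤ √(1 + σ ^ 2) / (σ * latticeMass γ) * latticeMass γ :=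
        mul_le_mul_of_nonneg_left (tsum_pancakeLR_terms_le hγ hσ z) (by positivity)
    _ = √(1 + σ ^ 2) / σ := by field_simp

lemma integral_exp_neg_pi_sq_mul_pancakeLR (hγ : 0 < γ) (hσ : 0 < σ) :
    ∫ z, exp (-π * z ^ 2) * pancakeLR γ σ z = 1 := by
  set F : ℤ → ℝ → ℝ := fun k z =>
    exp (-π * z ^ 2) * exp (-π * (z - √(1 + σ ^ 2) * k / γ) ^ 2 / σ ^ 2)
  have hval : ∀ k : ℤ,
      ∫ z, F k z = σ / √(1 + σ ^ 2) * exp (-π * (γ ^ 2)⁻¹ * (k : ℝ) ^ 2) := by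
    intro k
    rw [integral_exp_neg_pi_sq_mul_exp_neg_pi_sub_sq_div hσ, div_pow, mul_pow,
      sq_sqrt (by positivity)]
    field_simp
  have hint : ∀ k, Integrable (F k) := fun k =>
    Integrable.of_integral_ne_zero (by rw [hval]; positivity)
  have hsum : Summable fun k => ∫ z, ‖F k z‖ := by
    refine ((summable_exp_neg_mul_int_sq (c := (γ ^ 2)⁻¹) (by positivity)).mul_left
      (σ / √(1 + σ ^ 2))).congr fun k => ?_
    rw [← hval]
    exact integral_congr_ae (ae_of_all _ fun z =>
      (norm_of_nonneg (mul_pos (exp_pos _) (exp_pos _)).le).symm)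
  have hM := latticeMass_pos hγ
  calc ∫ z, exp (-π * z ^ 2) * pancakeLR γ σ z
      = ∫ z, √(1 + σ ^ 2) / (σ * latticeMass γ) * ∑' k, F k z := by
        simp_rw [pancakeLR, F, tsum_mul_left]
        congr 1 with z
        ring
    _ = √(1 + σ ^ 2) / (σ * latticeMass γ) * (σ / √(1 + σ ^ 2) * latticeMass γ) := by
        rw [integral_const_mul, ← integral_tsum_of_summable_integral_norm hint hsum,
          tsum_congr hval, tsum_mul_left, latticeMass_eq_tsum]
    _ = 1 := by field_simp

end

lemma integral_mul_mul_log_le_log {α : Type*} [MeasurableSpace α] {μ : Measure α}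
    {p T : α → ℝ} {C : ℝ} (hp : ∀ x, 0 ≤ p x) (hT : ∀ x, 0 < T x) (hTC : ∀ x, T x ≤ C)
    (hC : 1 ≤ C) (hmass : ∫ x, p x * T x ∂μ = 1) :
    ∫ x, p x * T x * log (T x) ∂μ ≤ log C := by
  by_cases hint : Integrable (fun x => p x * T x * log (T x)) μ
  swap
  · rw [integral_undef hint]
    exact log_nonneg hC
  have hpT : Integrable (fun x => p x * T x) μ :=
    Integrable.of_integral_ne_zero (by rw [hmass]; exact one_ne_zero)
  calc ∫ x, p x * T x * log (T x) ∂μ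
      ≤ ∫ x, p x * T x * log C ∂μ :=
        integral_mono hint (hpT.mul_const _) fun x =>
          mul_le_mul_of_nonneg_left (log_le_log (hT x) (hTC x)) (mul_nonneg (hp x) (hT x).le)
    _ = log C := by rw [integral_mul_const, hmass, one_mul]

lemma log_sqrt_one_add_sq_div_le {σ : ℝ} (hσ : 0 < σ) :
    log (√(1 + σ ^ 2) / σ) ≤ 1 / (2 * σ ^ 2) := by
  have hratio : √(1 + σ ^ 2) / σ = √(1 + 1 / σ ^ 2) := by
    rw [← sqrt_sq hσ.le, ← sqrt_div' _ (by positivity), sqrt_sq hσ.le]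
    congr 1
    field_simp
    ring
  rw [hratio, log_sqrt (by positivity)]
  have hhalf : 1 / (2 * σ ^ 2) = 1 / σ ^ 2 / 2 := by field_simp
  linarith [log_le_sub_one_of_pos (by positivity : 0 < 1 + 1 / σ ^ 2)]

/-- The KL divergence is expressed via the density of `A_γ^σ` relative to Lebesgue measure,
namely `z ↦ exp(-πz²) · T_γ^σ(z)`, so `KL = ∫ exp(-πz²) T(z) log T(z) dz`. -/
theorem smoothedDiscreteGaussian_kl_le (γ σ : ℝ) (hγ : 0 < γ) (hσ : 0 < σ) :
    (∫ z : ℝ, Real.exp (-Real.pi * z ^ 2) * pancakeLR γ σ z * Real.log (pancakeLR γ σ z))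
      ≤ Real.log (Real.sqrt (1 + σ ^ 2) / σ) ∧
    Real.log (Real.sqrt (1 + σ ^ 2) / σ) ≤ 1 / (2 * σ ^ 2) := by
  have hC : 1 ≤ √(1 + σ ^ 2) / σ := (one_le_div hσ).2 (le_sqrt_of_sq_le (by linarith))
  exact ⟨integral_mul_mul_log_le_log (fun z => (exp_pos _).le) (pancakeLR_pos hγ hσ)
    (pancakeLR_le hγ hσ) hC (integral_exp_neg_pi_sq_mul_pancakeLR hγ hσ),
    log_sqrt_one_add_sq_div_le hσ⟩
end

section
/- Let Q = N(0, 1/(2π)). For any γ > 0, σ > 0, the σ-smoothed discrete Gaussian A_γ^σ has density A_γ^σ(z) = (√(1+σ²)/(σ ρ((1/γ)ℤ))) · ρ(z) · Σ_{k∈ℤ} ρ_σ(z − √(1+σ²) k/γ), where ρ(x) = exp(-π x²) and ρ_σ(x) = exp(-π x²/σ²). -/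
open Real MeasureTheory

/-- The discrete Gaussian `A_γ` on `(1/γ)ℤ`, assigning to `k/γ` the mass
`exp(-π(k/γ)²)/ρ((1/γ)ℤ)`. -/
noncomputable def discreteGaussianMeasure (γ : ℝ) : Measure ℝ :=
  Measure.sum fun k : ℤ =>
    (ENNReal.ofReal (Real.exp (-Real.pi * ((k : ℝ) / γ) ^ 2) / latticeMass γ)) •
      Measure.dirac ((k : ℝ) / γ)

/-- The σ-smoothed discrete Gaussian `A_γ^σ`: the law of `(x + σz)/√(1+σ²)` with
`x ∼ A_γ` and `z ∼ N(0, 1/(2π))` independent. -/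
noncomputable def smoothedDiscreteGaussian (γ σ : ℝ) : Measure ℝ :=
  Measure.map (fun p : ℝ × ℝ => (p.1 + σ * p.2) / Real.sqrt (1 + σ ^ 2))
    ((discreteGaussianMeasure γ).prod
      (ProbabilityTheory.gaussianReal 0 ((2 * Real.pi)⁻¹).toNNReal))

/-!
Given `x = k/γ`, the variable `(x + σz)/t` with `t = √(1+σ²)` is Gaussian with mean `x/t` and
width `σ/t`, so `A_γ^σ` is a countable mixture of Gaussians and its density is the sum of their
weighted densities. Completing the square, `ρ(x) ρ_{σ/t}(z - x/t) = ρ(z) ρ_σ(z - t x)` because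
`t² = 1 + σ²`; this pulls the common factor `ρ(z)` out of the sum.
-/

open scoped NNReal

open ProbabilityTheory

lemma summable_exp_neg_pi_mul_sub_mul_int_sq {s : ℝ} (hs : 0 < s) {c : ℝ} (hc : c ≠ 0) (x : ℝ) :
    Summable fun n : ℤ => Real.exp (-π * (x - c * n) ^ 2 / s) := by
  -- Up to the factor `exp (-π x² / s)`, these are the norms of the terms of the Jacobi theta
  -- series at `z = -i x c / s` and `τ = i c² / s`.
  have hθ := ((summable_jacobiTheta₂_term_iff (((-(x * c / s) : ℝ) : ℂ) * Complex.I)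
    (((c ^ 2 / s : ℝ) : ℂ) * Complex.I)).mpr (by
      rw [Complex.mul_I_im, Complex.ofReal_re]; exact div_pos (sq_pos_of_ne_zero hc) hs)).norm
  refine (hθ.mul_left (Real.exp (-π * x ^ 2 / s))).congr fun n => ?_
  rw [norm_jacobiTheta₂_term, ← Real.exp_add]
  simp only [Complex.mul_I_im, Complex.ofReal_re]
  congr 1
  field_simp
  ring

lemma ProbabilityTheory.gaussianReal_map_affine (v : ℝ≥0) (a b t : ℝ) :
    (gaussianReal 0 v).map (fun y => (a + b * y) / t) =
      gaussianReal (a / t) (.mk ((b / t) ^ 2) (sq_nonneg _) * v) := by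
  have hcomp : (fun y => (a + b * y) / t) = (· + a / t) ∘ ((b / t) * ·) := by
    funext y
    simp only [Function.comp_apply]
    ring
  rw [hcomp, ← Measure.map_map (measurable_add_const _) (measurable_const_mul _),
    gaussianReal_map_const_mul, gaussianReal_map_add_const, mul_zero, zero_add]

lemma ProbabilityTheory.gaussianPDFReal_sq_mul_inv_two_pi {s : ℝ} (hs : 0 < s) (μ x : ℝ) :
    gaussianPDFReal μ (.mk (s ^ 2) (sq_nonneg _) * ((2 * π)⁻¹).toNNReal) x =
      s⁻¹ * Real.exp (-π * (x - μ) ^ 2 / s ^ 2) := by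
  have hv : ((.mk (s ^ 2) (sq_nonneg _) * ((2 * π)⁻¹).toNNReal : ℝ≥0) : ℝ) = s ^ 2 / (2 * π) := by
    simp [div_eq_mul_inv, pi_pos.le]
  rw [gaussianPDFReal, hv, mul_div_cancel₀ _ (by positivity), Real.sqrt_sq hs.le]
  congr 2
  field_simp

lemma exp_neg_pi_sq_mul_exp_neg_pi_sub_div_sq {σ t : ℝ} (hσ : σ ≠ 0) (ht : t ^ 2 = 1 + σ ^ 2)
    (x z : ℝ) :
    Real.exp (-π * x ^ 2) * Real.exp (-π * (z - x / t) ^ 2 / (σ / t) ^ 2) =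
      Real.exp (-π * z ^ 2) * Real.exp (-π * (z - t * x) ^ 2 / σ ^ 2) := by
  have ht0 : t ≠ 0 := by rintro rfl; nlinarith [sq_nonneg σ]
  rw [← Real.exp_add, ← Real.exp_add]
  congr 1
  field_simp
  linear_combination (x ^ 2 - z ^ 2) * ht

lemma MeasureTheory.Measure.map_dirac_prod {α β γ : Type*} [MeasurableSpace α] [MeasurableSpace β]
    [MeasurableSpace γ] [MeasurableSingletonClass α] (ν : Measure β) [SFinite ν]
    {f : α × β → γ} (hf : Measurable f) (x : α) :
    ((Measure.dirac x).prod ν).map f = ν.map fun y => f (x, y) := by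
  rw [Measure.dirac_prod, Measure.map_map hf measurable_prodMk_left]
  rfl

lemma smoothedDiscreteGaussian_eq_sum (γ σ : ℝ) :
    smoothedDiscreteGaussian γ σ = Measure.sum fun k : ℤ =>
      ENNReal.ofReal (Real.exp (-π * ((k : ℝ) / γ) ^ 2) / latticeMass γ) •
        gaussianReal ((k : ℝ) / γ / √(1 + σ ^ 2))
          (.mk ((σ / √(1 + σ ^ 2)) ^ 2) (sq_nonneg _) * ((2 * π)⁻¹).toNNReal) := by
  have hf : Measurable fun p : ℝ × ℝ => (p.1 + σ * p.2) / √(1 + σ ^ 2) := by fun_prop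
  simp_rw [smoothedDiscreteGaussian, discreteGaussianMeasure, Measure.prod_sum_left,
    Measure.map_sum hf.aemeasurable, Measure.prod_smul_left, Measure.map_smul,
    Measure.map_dirac_prod _ hf, gaussianReal_map_affine]

lemma exp_neg_pi_sq_div_mul_gaussianPDFReal {σ : ℝ} (hσ : 0 < σ) (L x z : ℝ) :
    Real.exp (-π * x ^ 2) / L * gaussianPDFReal (x / √(1 + σ ^ 2))
        (.mk ((σ / √(1 + σ ^ 2)) ^ 2) (sq_nonneg _) * ((2 * π)⁻¹).toNNReal) z =
      √(1 + σ ^ 2) / (σ * L) * Real.exp (-π * z ^ 2) *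
        Real.exp (-π * (z - √(1 + σ ^ 2) * x) ^ 2 / σ ^ 2) := by
  have ht : 0 < √(1 + σ ^ 2) := Real.sqrt_pos.mpr (by positivity)
  have hsq : √(1 + σ ^ 2) ^ 2 = 1 + σ ^ 2 := Real.sq_sqrt (by positivity)
  rw [gaussianPDFReal_sq_mul_inv_two_pi (div_pos hσ ht), inv_div, mul_assoc,
    ← exp_neg_pi_sq_mul_exp_neg_pi_sub_div_sq hσ.ne' hsq x z]
  ring

/-- Density of the σ-smoothed discrete Gaussian:
`A_γ^σ(z) = (√(1+σ²)/(σ ρ((1/γ)ℤ))) · ρ(z) · Σ_{k∈ℤ} ρ_σ(z − √(1+σ²)k/γ)`. -/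
theorem smoothedDiscreteGaussian_density (γ σ : ℝ) (hγ : 0 < γ) (hσ : 0 < σ) :
    smoothedDiscreteGaussian γ σ =
      volume.withDensity fun z => ENNReal.ofReal
        ((Real.sqrt (1 + σ ^ 2) / (σ * latticeMass γ)) * Real.exp (-Real.pi * z ^ 2) *
          ∑' k : ℤ, Real.exp (-Real.pi * (z - Real.sqrt (1 + σ ^ 2) * (k : ℝ) / γ) ^ 2 / σ ^ 2)) := by
  have hv : (.mk ((σ / √(1 + σ ^ 2)) ^ 2) (sq_nonneg _) * ((2 * π)⁻¹).toNNReal : ℝ≥0) ≠ 0 := by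
    have ht : 0 < √(1 + σ ^ 2) := Real.sqrt_pos.mpr (by positivity)
    rw [← NNReal.coe_ne_zero]
    simp [hσ.ne', ht.ne', pi_pos]
  have hL : 0 ≤ latticeMass γ := tsum_nonneg fun _ => (Real.exp_pos _).le
  rw [smoothedDiscreteGaussian_eq_sum]
  simp_rw [gaussianReal_of_var_ne_zero _ hv, ← withDensity_smul _ (measurable_gaussianPDF _ _)]
  rw [← withDensity_tsum fun k => (measurable_gaussianPDF _ _).const_smul _]
  congr 1
  funext z
  have hsum := summable_exp_neg_pi_mul_sub_mul_int_sq (pow_pos hσ 2)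
    (c := √(1 + σ ^ 2) / γ) (div_ne_zero (Real.sqrt_pos.mpr (by positivity)).ne' hγ.ne') z
  simp_rw [div_mul_eq_mul_div] at hsum
  rw [tsum_apply (Pi.summable.mpr fun _ => ENNReal.summable), ← tsum_mul_left,
    ENNReal.ofReal_tsum_of_nonneg (fun k => by positivity) (hsum.mul_left _)]
  refine tsum_congr fun k => ?_
  rw [Pi.smul_apply, smul_eq_mul, gaussianPDF, ← ENNReal.ofReal_mul (by positivity),
    exp_neg_pi_sq_div_mul_gaussianPDFReal hσ, ← mul_div_assoc (√(1 + σ ^ 2))]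
end

section
/- For γ > 1, the Gaussian mass of the lattice (1/γ)ℤ satisfies |ρ((1/γ)ℤ)/γ − 1| ≤ 2(1 + 1/(πγ)) exp(-πγ²) < 3 exp(-πγ²) < 1/4, where ρ(S) = Σ_{x∈S} exp(-πx²). -/
/-!
By Poisson summation `ρ((1/γ)ℤ) = γ · Σₙ exp(-πγ²n²)`, and the last sum is the Jacobi theta
function at `τ = iγ²`. Its distance from `1` is twice a tail `Σ_{n ≥ 1} qⁿ²` with
`q = exp(-πγ²)`, which is dominated by the geometric series `q / (1 - q)`; finally
`1 / (1 - e⁻ˣ) ≤ 1 + 1/x` because `eˣ - 1 ≥ x`, and `x = πγ² ≥ πγ`.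
-/

open Real

lemma latticeMass_eq_mul_tsum {γ : ℝ} (hγ : 0 < γ) :
    latticeMass γ = γ * ∑' n : ℤ, exp (-π * γ ^ 2 * (n : ℝ) ^ 2) := by
  have hsqrt : (γ ^ 2) ^ (1 / 2 : ℝ) = γ := by
    rw [← sqrt_eq_rpow, sqrt_sq hγ.le]
  rw [tsum_exp_neg_mul_int_sq (by positivity), hsqrt, latticeMass, ← mul_assoc,
    mul_one_div_cancel hγ.ne', one_mul]
  congr 1 with n
  field_simp

lemma ofReal_tsum_exp_neg_mul_int_sq (t : ℝ) :
    ((∑' n : ℤ, exp (-π * t * (n : ℝ) ^ 2) : ℝ) : ℂ) = jacobiTheta (t * Complex.I) := by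
  rw [Complex.ofReal_tsum, jacobiTheta]
  congr 1 with n
  push_cast
  ring_nf
  simp [Complex.I_sq]

lemma abs_latticeMass_div_sub_one_le {γ : ℝ} (hγ : 0 < γ) :
    |latticeMass γ / γ - 1| ≤ 2 / (1 - exp (-π * γ ^ 2)) * exp (-π * γ ^ 2) := by
  have him : ((γ ^ 2 : ℝ) * Complex.I).im = γ ^ 2 := by
    rw [Complex.mul_I_im, Complex.ofReal_re]
  rw [latticeMass_eq_mul_tsum hγ, mul_div_cancel_left₀ _ hγ.ne', ← Real.norm_eq_abs,
    ← Complex.norm_real, Complex.ofReal_sub, ofReal_tsum_exp_neg_mul_int_sq, Complex.ofReal_one]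
  have h := norm_jacobiTheta_sub_one_le (τ := (γ ^ 2 : ℝ) * Complex.I) (by rw [him]; positivity)
  rwa [him] at h

lemma one_div_one_sub_exp_neg_le {x : ℝ} (hx : 0 < x) : 1 / (1 - exp (-x)) ≤ 1 + 1 / x := by
  have hx_le : x ≤ exp x - 1 := by linarith [add_one_le_exp x]
  calc 1 / (1 - exp (-x)) = 1 + 1 / (exp x - 1) := by
        rw [exp_neg]
        field_simp [(hx.trans_le hx_le).ne']
        ring
    _ ≤ 1 + 1 / x := by gcongr

lemma twelve_lt_exp_three : (12 : ℝ) < exp 3 :=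
  calc (12 : ℝ) < 2.7182818283 ^ 3 := by norm_num
    _ < exp 1 ^ 3 := by gcongr; exact exp_one_gt_d9
    _ = exp 3 := by rw [← exp_nat_mul]; norm_num

/-- For `γ > 1`, `|ρ((1/γ)ℤ)/γ − 1| ≤ 2(1+1/(πγ))e^{-πγ²} < 3e^{-πγ²} < 1/4`. -/
theorem latticeMass_close_to_gamma (γ : ℝ) (hγ : 1 < γ) :
    |latticeMass γ / γ - 1| ≤ 2 * (1 + 1 / (Real.pi * γ)) * Real.exp (-Real.pi * γ ^ 2) ∧
    2 * (1 + 1 / (Real.pi * γ)) * Real.exp (-Real.pi * γ ^ 2)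
      < 3 * Real.exp (-Real.pi * γ ^ 2) ∧
    3 * Real.exp (-Real.pi * γ ^ 2) < 1 / 4 := by
  have hγ0 : 0 < γ := one_pos.trans hγ
  have hπγ : 3 < π * γ := by nlinarith [pi_gt_three]
  have hπγ_le : π * γ ≤ π * γ ^ 2 := by nlinarith [pi_pos]
  have hE : 0 < exp (-π * γ ^ 2) := exp_pos _
  refine ⟨?_, ?_, ?_⟩
  · calc |latticeMass γ / γ - 1| ≤ 2 / (1 - exp (-π * γ ^ 2)) * exp (-π * γ ^ 2) :=
          abs_latticeMass_div_sub_one_le hγ0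
      _ = 2 * (1 / (1 - exp (-(π * γ ^ 2)))) * exp (-π * γ ^ 2) := by ring_nf
      _ ≤ 2 * (1 + 1 / (π * γ ^ 2)) * exp (-π * γ ^ 2) := by
          gcongr; exact one_div_one_sub_exp_neg_le (by positivity)
      _ ≤ 2 * (1 + 1 / (π * γ)) * exp (-π * γ ^ 2) := by gcongr
  · have : 1 / (π * γ) < 1 / 2 := by gcongr; linarith
    nlinarith
  · have : exp (-π * γ ^ 2) < exp (-3) := exp_lt_exp.2 (by linarith)
    have : exp (-3) < 1 / 12 := by
      rw [exp_neg, inv_lt_comm₀ (exp_pos _) (by norm_num)]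
      norm_num [twelve_lt_exp_three]
    linarith
end
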